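/- There exist a constant α > 0 and an infinite family of strings such that for each string T of length n in the family (over an alphabet whose size grows with n), every LZ-like encoding of T whose underlying parsing is the greedy LZ77 parsing has height at least α·n; that is, the height of the LZ77 encoding can be Θ(n). -/

import Mathlib

variable {α : Type*}

/-- The substring `T[i..i+ℓ)` (0-indexed). -/
def sub (T : List α) (i ℓ : ℕ) : List α := (T.drop i).take ℓ

/-- `p` is a period of `w`: `0 < p ≤ |w|` and `w[i] = w[i+p]` whenever both sides exist. -/
def IsPeriod (w : List α) (p : ℕ) : Prop :=
  0 < p ∧ p ≤ w.length ∧ ∀ i, i + p < w.length → w[i]? = w[i + p]?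

/-- The minimum period of `w`. -/
noncomputable def minPeriod (w : List α) : ℕ := sInf {p | IsPeriod w p}

/-- Starting position (0-indexed) of the `j`-th phrase (0-indexed) of a parsing,
the parsing being given as a list of (length, source) pairs. -/
def startOf (P : List (ℕ × ℕ)) (j : ℕ) : ℕ := ((P.take j).map Prod.fst).sum

/-- Length of the `j`-th phrase. -/
def lenOf (P : List (ℕ × ℕ)) (j : ℕ) : ℕ := (P[j]?.map Prod.fst).getD 0

/-- Source of the `j`-th phrase. -/
def srcOf (P : List (ℕ × ℕ)) (j : ℕ) : ℕ := (P[j]?.map Prod.snd).getD 0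

/-- `P` is an LZ-like encoding of `T`: phrases have positive length, cover `T`,
and every phrase of length at least 2 has a source strictly before its start with a
matching (possibly overlapping) previous occurrence. (Length-1 phrases are literal
symbols; the symbol is determined by `T`, so it need not be stored.) -/
def IsLZ (T : List α) (P : List (ℕ × ℕ)) : Prop :=
  (∀ q ∈ P, 1 ≤ q.1) ∧ (P.map Prod.fst).sum = T.length ∧
  ∀ j < P.length, 2 ≤ lenOf P j →
    srcOf P j < startOf P j ∧
    sub T (srcOf P j) (lenOf P j) = sub T (startOf P j) (lenOf P j)

/-- `H` is the height function of the LZ-like encoding `P`: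
`H i = 0` on length-1 phrases, and otherwise
`H i = H (s_j + (i - b_j) % (b_j - s_j)) + 1` for position `i` of phrase `j`. -/
def IsHeight (P : List (ℕ × ℕ)) (H : ℕ → ℕ) : Prop :=
  ∀ j < P.length, ∀ i, startOf P j ≤ i → i < startOf P j + lenOf P j →
    (lenOf P j = 1 → H i = 0) ∧
    (2 ≤ lenOf P j →
      H i = H (srcOf P j + (i - startOf P j) % (startOf P j - srcOf P j)) + 1)

/-- The LZ-like encoding `P` of `T` is `h`-bounded. -/
def HBounded (T : List α) (P : List (ℕ × ℕ)) (h : ℕ) : Prop :=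
  ∃ H : ℕ → ℕ, IsHeight P H ∧ ∀ i < T.length, H i ≤ h

/-- `z^h(T)`: minimum size of an `h`-bounded LZ-like encoding of `T`. -/
noncomputable def zh (T : List α) (h : ℕ) : ℕ :=
  sInf {k | ∃ P : List (ℕ × ℕ), IsLZ T P ∧ HBounded T P h ∧ P.length = k}

/-- `lpf_T(b)`: length of the longest previous factor at position `b` (0-indexed). -/
noncomputable def lpf (T : List α) (b : ℕ) : ℕ :=
  sSup {l | b + l ≤ T.length ∧ ∃ s < b, sub T s l = sub T b l}

/-- Number of phrases of the greedy LZ77 parsing of `T[b..)`;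
`lzCount T 0 = z(T)` is the size of the greedy LZ77 parsing of `T`. -/
noncomputable def lzCount (T : List α) (b : ℕ) : ℕ :=
  if hb : b < T.length then lzCount T (b + max 1 (lpf T b)) + 1 else 0
termination_by T.length - b
decreasing_by
  have h1 : 1 ≤ max 1 (lpf T b) := le_max_left _ _
  omega

/-- Starting positions of the phrases of the greedy LZ77 parsing of `T` (from `b`). -/
noncomputable def lzStarts (T : List α) (b : ℕ) : List ℕ :=
  if hb : b < T.length then b :: lzStarts T (b + max 1 (lpf T b)) else []
termination_by T.length - b
decreasing_by
  have h1 : 1 ≤ max 1 (lpf T b) := le_max_left _ _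
  omega

/-!
Take the string `0 c₀ 0 c₀ c₀ · 0 c₁ 0 c₁ c₁ ⋯ 0 cₘ 0 cₘ cₘ · 0` with pairwise distinct nonzero
letters `c_q`. Its greedy LZ77 parsing is forced: the literal `0`, and in each block the literal
`c_q`, the phrase `0 c_q`, whose only earlier occurrence starts at the beginning of the block,
and the phrase `c_q 0`, whose only earlier occurrence is the first `c_q` of the block. Hence the
height of the `0` opening block `q + 1` is two more than that of the `0` opening block `q`, and
the final `0` has height `2(m + 1)`, at least a third of the length `5m + 6`.
-/

section Substrings

variable (T : List α)

lemma getElem?_sub (i ℓ j : ℕ) : (sub T i ℓ)[j]? = if j < ℓ then T[i + j]? else none := by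
  simp [sub, List.getElem?_take, List.getElem?_drop]

lemma sub_eq_sub_iff (s b ℓ : ℕ) :
    sub T s ℓ = sub T b ℓ ↔ ∀ j < ℓ, T[s + j]? = T[b + j]? := by
  refine ⟨fun h j hj => ?_, fun h => List.ext_getElem? fun j => ?_⟩
  · simpa [getElem?_sub, hj] using congrArg (·[j]?) h
  · simp only [getElem?_sub]
    split_ifs with hj
    exacts [h j hj, rfl]

lemma take_sub (i : ℕ) {ℓ ℓ' : ℕ} (h : ℓ' ≤ ℓ) : (sub T i ℓ).take ℓ' = sub T i ℓ' := by
  simp [sub, List.take_take, Nat.min_eq_left h]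

lemma le_lpf {b v s : ℕ} (hv : b + v ≤ T.length) (hs : s < b) (h : sub T s v = sub T b v) :
    v ≤ lpf T b :=
  le_csSup ⟨T.length, fun _ hl => by have := hl.1; omega⟩ ⟨hv, s, hs, h⟩

lemma lpf_le {b v : ℕ}
    (h : ∀ s < b, b + (v + 1) ≤ T.length → sub T s (v + 1) ≠ sub T b (v + 1)) :
    lpf T b ≤ v := by
  refine csSup_le' fun l ⟨hl, s, hs, hsub⟩ => ?_
  by_contra! hvl
  refine h s hs (by omega) ?_
  rw [← take_sub T s hvl, ← take_sub T b hvl, hsub]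

lemma lpf_eq_zero {b : ℕ} (h : ∀ s < b, T[s]? ≠ T[b]?) : lpf T b = 0 :=
  Nat.le_zero.1 <| lpf_le T fun s hs _ hsub => h s hs <| by
    simpa using (sub_eq_sub_iff T s b 1).1 hsub 0 one_pos

lemma lzStarts_eq_map_range (f : ℕ → ℕ) (n : ℕ) (hlast : T.length ≤ f n)
    (hlt : ∀ k < n, f k < T.length) (hstep : ∀ k < n, f (k + 1) = f k + max 1 (lpf T (f k))) :
    lzStarts T (f 0) = (List.range n).map f := by
  suffices ∀ d k, k + d = n → lzStarts T (f k) = (List.range' k d).map f by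
    simpa [List.range_eq_range'] using this n 0 (zero_add n)
  intro d
  induction d with
  | zero =>
    intro k hk
    rw [Nat.add_zero] at hk
    subst hk
    rw [lzStarts, dif_neg (by omega)]
    rfl
  | succ d ih =>
    intro k hk
    rw [lzStarts, dif_pos (hlt k (by omega)), ← hstep k (by omega), ih (k + 1) (by omega),
      List.range'_succ, List.map_cons]

end Substrings

section Encodings

variable {P : List (ℕ × ℕ)}

lemma List.map_range_eq_map_range_iff {β : Type*} {f g : ℕ → β} {n k : ℕ} :
    (List.range n).map f = (List.range k).map g ↔ n = k ∧ ∀ j < n, f j = g j := by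
  refine ⟨fun h => ?_, fun ⟨hnk, h⟩ => ?_⟩
  · have hnk : n = k := by simpa using congrArg List.length h
    refine ⟨hnk, fun j hj => ?_⟩
    simpa [List.getElem?_range, hj, hnk ▸ hj] using congrArg (·[j]?) h
  · subst hnk
    exact List.map_congr_left fun j hj => h j (List.mem_range.1 hj)

lemma startOf_succ {j : ℕ} (hj : j < P.length) : startOf P (j + 1) = startOf P j + lenOf P j := by
  rw [startOf, startOf, ← List.take_concat_get hj, List.concat_eq_append, List.map_append,
    List.sum_append]
  simp [lenOf, List.getElem?_eq_getElem hj]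

lemma IsLZ.startOf_length {T : List α} (hlz : IsLZ T P) : startOf P P.length = T.length := by
  rw [startOf, List.take_length, hlz.2.1]

lemma IsLZ.getElem?_srcOf_add {T : List α} (hlz : IsLZ T P) {j d : ℕ} (hj : j < P.length)
    (hlen : 2 ≤ lenOf P j) (hd : d < lenOf P j) :
    T[srcOf P j + d]? = T[startOf P j + d]? :=
  (sub_eq_sub_iff T _ _ _).1 (hlz.2.2 j hj hlen).2 d hd

lemma IsHeight.eq_zero {H : ℕ → ℕ} (hH : IsHeight P H) {j : ℕ} (hj : j < P.length)
    (hlen : lenOf P j = 1) : H (startOf P j) = 0 :=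
  (hH j hj _ le_rfl (by omega)).1 hlen

lemma IsHeight.eq_srcOf_add {H : ℕ → ℕ} (hH : IsHeight P H) {j d : ℕ} (hj : j < P.length)
    (hlen : 2 ≤ lenOf P j) (hd : d < lenOf P j) (hdist : d < startOf P j - srcOf P j) :
    H (startOf P j + d) = H (srcOf P j + d) + 1 := by
  have := (hH j hj (startOf P j + d) (by omega) (by omega)).2 hlen
  rwa [Nat.add_sub_cancel_left, Nat.mod_eq_of_lt hdist] at this

end Encodings

/-- Block `q` of `hardString m` is `0 (q+1) 0 (q+1) (q+1)`; a final `0` closes the string. -/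
def hardLetter (p : ℕ) : ℕ := if p % 5 = 0 ∨ p % 5 = 2 then 0 else p / 5 + 1

def hardString (m : ℕ) : List ℕ := (List.range (5 * m + 6)).map hardLetter

lemma hardLetter_eq_hardLetter_iff {x y : ℕ} :
    hardLetter x = hardLetter y ↔
      ((x % 5 = 0 ∨ x % 5 = 2) ∧ (y % 5 = 0 ∨ y % 5 = 2)) ∨
      (x % 5 ≠ 0 ∧ x % 5 ≠ 2 ∧ y % 5 ≠ 0 ∧ y % 5 ≠ 2 ∧ x / 5 = y / 5) := by
  unfold hardLetter
  split_ifs <;> grind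

namespace hardString

variable {m : ℕ}

lemma length (m : ℕ) : (hardString m).length = 5 * m + 6 := by
  simp [hardString]

lemma getElem?_eq_getElem?_iff {x y : ℕ} (hx : x < 5 * m + 6) (hy : y < 5 * m + 6) :
    (hardString m)[x]? = (hardString m)[y]? ↔ hardLetter x = hardLetter y := by
  simp [hardString, hx, hy]

lemma sub_eq_sub_iff {s b ℓ : ℕ} (hs : s + ℓ ≤ 5 * m + 6) (hb : b + ℓ ≤ 5 * m + 6) :
    sub (hardString m) s ℓ = sub (hardString m) b ℓ ↔
      ∀ j < ℓ, hardLetter (s + j) = hardLetter (b + j) := by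
  rw [_root_.sub_eq_sub_iff]
  exact forall₂_congr fun j hj => getElem?_eq_getElem?_iff (by omega) (by omega)

lemma lpf_eq_zero {b : ℕ} (hb : b < 5 * m + 6) (hfirst : b % 5 = 1 ∨ b = 0) :
    lpf (hardString m) b = 0 :=
  _root_.lpf_eq_zero _ fun s hs h => by
    rw [getElem?_eq_getElem?_iff (by omega) hb, hardLetter_eq_hardLetter_iff] at h
    omega

lemma lpf_eq_two {b : ℕ} (hb : b + 2 ≤ 5 * m + 6) (hpos : b % 5 = 2 ∨ b % 5 = 4) :
    lpf (hardString m) b = 2 := by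
  apply le_antisymm
  · refine lpf_le _ fun s hs hlen hsub => ?_
    rw [length] at hlen
    have h := (sub_eq_sub_iff (by omega) hlen).1 hsub
    have h₀ := hardLetter_eq_hardLetter_iff.1 (h 0 (by omega))
    have h₁ := hardLetter_eq_hardLetter_iff.1 (h 1 (by omega))
    have h₂ := hardLetter_eq_hardLetter_iff.1 (h 2 (by omega))
    omega
  · obtain ⟨s, hs, hsrc⟩ : ∃ s < b, b % 5 = 2 ∧ s = b - 2 ∨ b % 5 = 4 ∧ s = b - 3 :=
      ⟨if b % 5 = 2 then b - 2 else b - 3, by split_ifs <;> omega⟩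
    refine le_lpf _ (by rw [length]; omega) hs ((sub_eq_sub_iff (by omega) hb).2 fun j hj => ?_)
    rw [hardLetter_eq_hardLetter_iff]
    omega

/-- The greedy phrases start at `0, 1, 2, 4, 6, 7, 9, …`; at `j = 0` the subtraction truncates. -/
def phraseStart (j : ℕ) : ℕ := (5 * j - 2) / 3

lemma lzStarts_eq (m : ℕ) :
    lzStarts (hardString m) 0 = (List.range (3 * m + 4)).map phraseStart :=
  lzStarts_eq_map_range (hardString m) phraseStart (3 * m + 4)
    (by rw [length, phraseStart]; omega) (fun k hk => by rw [length, phraseStart]; omega)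
    fun k hk => by
      obtain rfl | ⟨q, rfl | rfl | rfl⟩ :
          k = 0 ∨ ∃ q, k = 3 * q + 1 ∨ k = 3 * q + 2 ∨ k = 3 * q + 3 :=
        (by rcases k with _ | k; exacts [.inl rfl, .inr ⟨k / 3, by omega⟩]) <;>
      unfold phraseStart <;>
      first
        | rw [lpf_eq_zero] <;> omega
        | rw [lpf_eq_two] <;> omega

variable {P : List (ℕ × ℕ)}

lemma startOf_lenOf (hlz : IsLZ (hardString m) P)
    (hP : (List.range P.length).map (startOf P) = lzStarts (hardString m) 0) :
    P.length = 3 * m + 4 ∧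
      ∀ j < 3 * m + 4, startOf P j = phraseStart j ∧
        lenOf P j = phraseStart (j + 1) - phraseStart j := by
  obtain ⟨hlen, hstart⟩ := List.map_range_eq_map_range_iff.1 (hP.trans (lzStarts_eq m))
  have hstart' : ∀ j ≤ 3 * m + 4, startOf P j = phraseStart j := by
    intro j hj
    rcases hj.lt_or_eq with hj | rfl
    · exact hstart j (hlen ▸ hj)
    · rw [← hlen, hlz.startOf_length, length, hlen, phraseStart]
      omega
  refine ⟨hlen, fun j hj => ⟨hstart' j hj.le, ?_⟩⟩
  rw [← hstart' j hj.le, ← hstart' (j + 1) hj, startOf_succ (hlen ▸ hj)]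
  omega

lemma hardLetter_srcOf_add (hlz : IsLZ (hardString m) P) {j d : ℕ} (hj : j < P.length)
    (hlen : 2 ≤ lenOf P j) (hd : d < lenOf P j) (hend : startOf P j + lenOf P j ≤ 5 * m + 6) :
    hardLetter (srcOf P j + d) = hardLetter (startOf P j + d) := by
  have hsrc := (hlz.2.2 j hj hlen).1
  exact (getElem?_eq_getElem?_iff (by omega) (by omega)).1 (hlz.getElem?_srcOf_add hj hlen hd)

lemma startOf_lenOf_srcOf_block (hlz : IsLZ (hardString m) P)
    (hP : (List.range P.length).map (startOf P) = lzStarts (hardString m) 0) {q : ℕ} (hq : q ≤ m) :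
    3 * q + 3 < P.length ∧
      startOf P (3 * q + 2) = 5 * q + 2 ∧ lenOf P (3 * q + 2) = 2 ∧ srcOf P (3 * q + 2) = 5 * q ∧
      startOf P (3 * q + 3) = 5 * q + 4 ∧ lenOf P (3 * q + 3) = 2 ∧
        srcOf P (3 * q + 3) = 5 * q + 1 := by
  obtain ⟨hlen, hphrase⟩ := startOf_lenOf hlz hP
  obtain ⟨hb₁, hl₁⟩ := hphrase (3 * q + 2) (by omega)
  obtain ⟨hb₂, hl₂⟩ := hphrase (3 * q + 3) (by omega)
  simp only [phraseStart] at hb₁ hl₁ hb₂ hl₂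
  replace hb₁ : startOf P (3 * q + 2) = 5 * q + 2 := by omega
  replace hl₁ : lenOf P (3 * q + 2) = 2 := by omega
  replace hb₂ : startOf P (3 * q + 3) = 5 * q + 4 := by omega
  replace hl₂ : lenOf P (3 * q + 3) = 2 := by omega
  have hs₁ := (hlz.2.2 _ (by omega) hl₁.ge).1
  have hs₂ := (hlz.2.2 _ (by omega) hl₂.ge).1
  have h₁ {d : ℕ} (hd : d < 2) := hardLetter_srcOf_add hlz (j := 3 * q + 2) (d := d) (by omega)
    hl₁.ge (by omega) (by omega)
  have h₂ {d : ℕ} (hd : d < 2) := hardLetter_srcOf_add hlz (j := 3 * q + 3) (d := d) (by omega)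
    hl₂.ge (by omega) (by omega)
  have h₁₀ := hardLetter_eq_hardLetter_iff.1 (h₁ zero_lt_two)
  have h₁₁ := hardLetter_eq_hardLetter_iff.1 (h₁ one_lt_two)
  have h₂₀ := hardLetter_eq_hardLetter_iff.1 (h₂ zero_lt_two)
  have h₂₁ := hardLetter_eq_hardLetter_iff.1 (h₂ one_lt_two)
  omega

lemma height_five_mul_add_five (hlz : IsLZ (hardString m) P)
    (hP : (List.range P.length).map (startOf P) = lzStarts (hardString m) 0) {H : ℕ → ℕ}
    (hH : IsHeight P H) {q : ℕ} (hq : q ≤ m) : H (5 * q + 5) = H (5 * q) + 2 := by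
  obtain ⟨hlen, hb₁, hl₁, hs₁, hb₂, hl₂, hs₂⟩ := startOf_lenOf_srcOf_block hlz hP hq
  have h₁ : H (5 * q + 2) = H (5 * q) + 1 := by
    have := hH.eq_srcOf_add (d := 0) (by omega) hl₁.ge (by omega) (by omega)
    rwa [hb₁, hs₁] at this
  have h₂ : H (5 * q + 5) = H (5 * q + 2) + 1 := by
    have := hH.eq_srcOf_add (d := 1) (by omega) hl₂.ge (by omega) (by omega)
    rwa [hb₂, hs₂] at this
  omega

lemma height_five_mul (hlz : IsLZ (hardString m) P)
    (hP : (List.range P.length).map (startOf P) = lzStarts (hardString m) 0) {H : ℕ → ℕ}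
    (hH : IsHeight P H) : ∀ q ≤ m + 1, H (5 * q) = 2 * q
  | 0, _ => by
    obtain ⟨hlen, hphrase⟩ := startOf_lenOf hlz hP
    exact hH.eq_zero (j := 0) (by omega) (hphrase 0 (by omega)).2
  | q + 1, hq => by
    rw [Nat.mul_succ, height_five_mul_add_five hlz hP hH (by omega),
      height_five_mul hlz hP hH q (by omega)]
    ring

end hardString

/-- The height of the LZ77 encoding can be `Θ(n)`: there are a constant `a > 0`
and an infinite family of strings (over a growing alphabet, here `ℕ`), of lengths
tending to infinity, such that every LZ-like encoding whose underlying parsing is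
the greedy LZ77 parsing has height at least `a · n`. -/
theorem stmt17 :
    ∃ a : ℝ, 0 < a ∧
      ∃ T : ℕ → List ℕ,
        Filter.Tendsto (fun m => (T m).length) Filter.atTop Filter.atTop ∧
        ∀ m : ℕ, ∀ P : List (ℕ × ℕ), IsLZ (T m) P →
          (List.range P.length).map (startOf P) = lzStarts (T m) 0 →
          ∀ H : ℕ → ℕ, IsHeight P H →
            ∃ i < (T m).length, a * (T m).length ≤ (H i : ℝ) := by
  refine ⟨1 / 3, by norm_num, hardString, ?_, fun m P hlz hP H hH => ⟨5 * (m + 1), ?_, ?_⟩⟩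
  · simp only [hardString.length]
    exact Filter.tendsto_atTop_atTop.2 fun b => ⟨b, fun n hn => by omega⟩
  · rw [hardString.length]
    omega
  · rw [hardString.height_five_mul hlz hP hH (m + 1) le_rfl, hardString.length]
    push_cast
    linarith
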